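/- Convexity inequality for the variance functional in the focusing discrete Klein–Gordon equation: Let d ≥ 1, h > 0, σ > 0, λ = −1, and let V = {V_n} ∈ l^∞_h be a real-valued potential with inf_{n∈hℤ^d} V_n > 0. Let (f,g) ∈ l²_h × l²_h be real-valued with E(f,g) < 0, and let u : [0,T) → l²_h be a twice continuously differentiable solution of ∂_t² u_n − (Δ_h u)_n + V_n u_n − |u_n|^{2σ} u_n = 0 with u(0) = f, ∂_t u(0) = g. Define I(t) = Σ_{n∈hℤ^d} u_n(t)². Then I is twice differentiable on [0,T) and for all t ∈ [0,T), I''(t) ≥ (4 + 2σ) Σ_{n∈hℤ^d} (∂_t u_n(t))². -/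

import Mathlib

/-!
In `ℓ²(hℤ^d)` the equation reads `ü + L u = N(u)`, where `L = -Δ_h + V` is a positive operator
and `N(x) = |x|^{2σ} x` is the gradient of `G(x) = Σ |x_n|^{2σ+2} / (2σ+2)`, with
`⟪x, N x⟫ = (2σ+2) G(x)`. Positivity of `-Δ_h` is summation by parts in operator form: the shift
`S_e` is an isometry with adjoint `S_{-e}`, so `⟪(2 - S_e - S_{-e}) x, x⟫ = ‖S_e x - x‖²`.
Hence the energy `E = ½‖u̇‖² + ½⟪L u, u⟫ - G(u)` is conserved, and for `I = ‖u‖²`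
`I'' = 2‖u̇‖² + 2⟪u, N(u) - L u⟫ = (2σ+4)‖u̇‖² + 2σ⟪L u, u⟫ - 4(σ+1)E ≥ (2σ+4)‖u̇‖²`
as soon as `E < 0`.
-/
noncomputable section

open scoped ENNReal

/-- The integer lattice indexing `hℤ^d` (the point `n ∈ hℤ^d` corresponds to `h • n`). -/
abbrev ZLat (d : ℕ) := Fin d → ℤ

/-- The `j`-th standard basis vector of the lattice. -/
def latE {d : ℕ} (j : Fin d) : ZLat d := Pi.single j 1

/-- The discrete Laplacian `Δ_h` on real-valued sequences on `hℤ^d`, acting pointwise: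
`(Δ_h u)_n = h⁻² Σ_j (u_{n+he_j} + u_{n−he_j} − 2u_n)`. -/
def discLapR (d : ℕ) (h : ℝ) (u : ZLat d → ℝ) : ZLat d → ℝ :=
  fun n => (∑ j : Fin d, (u (n + latE j) + u (n - latE j) - 2 * u n)) / h ^ 2

/-- `u : ℝ → l^p_h` (real-valued) is a twice continuously differentiable solution
(with first and second derivatives `u'`, `u''`) of the discrete nonlinear Klein–Gordon equation
`∂_t² u_n(t) − (Δ_h u(t))_n + V_n u_n(t) + λ |u_n(t)|^{2σ} u_n(t) = 0` on the set `S ⊆ ℝ`. -/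
def IsDKGSolutionOn (d : ℕ) (h σ lam : ℝ) (V : ZLat d → ℝ) (p : ℝ≥0∞) [Fact (1 ≤ p)]
    (S : Set ℝ) (u u' u'' : ℝ → lp (fun _ : ZLat d => ℝ) p) : Prop :=
  (∀ t ∈ S, HasDerivWithinAt u (u' t) S t) ∧
  (∀ t ∈ S, HasDerivWithinAt u' (u'' t) S t) ∧
  ContinuousOn u'' S ∧
    ∀ t ∈ S, ∀ n : ZLat d,
      (u'' t : ZLat d → ℝ) n - discLapR d h (⇑(u t)) n + V n * (u t : ZLat d → ℝ) n
        + lam * |(u t : ZLat d → ℝ) n| ^ (2 * σ) * (u t : ZLat d → ℝ) n = 0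

/-- The conserved energy of the discrete nonlinear Klein–Gordon equation:
`E(u,v) = ½ Σ_n ( v_n² + h⁻² Σ_j (u_{n+he_j} − u_n)² + V_n u_n² + (λ/(σ+1)) |u_n|^{2σ+2} )`. -/
def energyKG (d : ℕ) (h σ lam : ℝ) (V : ZLat d → ℝ) (u v : ZLat d → ℝ) : ℝ :=
  (1 / 2) * ∑' n : ZLat d,
    (v n ^ 2 + (∑ j : Fin d, (u (n + latE j) - u n) ^ 2) / h ^ 2 + V n * u n ^ 2
      + (lam / (σ + 1)) * |u n| ^ (2 * σ + 2))

open Asymptotics Filter Topology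
open scoped lp RealInnerProductSpace

section RealL2

variable {ι : Type*}

theorem memℓp_two_iff_summable_sq {f : ι → ℝ} : Memℓp f 2 ↔ Summable fun n => f n ^ 2 := by
  rw [memℓp_gen_iff (by norm_num)]
  norm_num [Real.norm_eq_abs, sq_abs]

namespace lp

theorem real_inner_eq_tsum (x y : ℓ²(ι, ℝ)) : ⟪x, y⟫ = ∑' n, x n * y n := by
  simp [lp.inner_eq_tsum, mul_comm]

theorem summable_real_mul (x y : ℓ²(ι, ℝ)) : Summable fun n => x n * y n := by
  have := lp.summable_inner (𝕜 := ℝ) x y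
  simp only [RCLike.inner_apply, conj_trivial] at this
  exact this.congr fun n => mul_comm _ _

theorem summable_sq (x : ℓ²(ι, ℝ)) : Summable fun n => x n ^ 2 :=
  memℓp_two_iff_summable_sq.1 (lp.memℓp x)

theorem norm_sq_eq_tsum_sq (x : ℓ²(ι, ℝ)) : ‖x‖ ^ 2 = ∑' n, x n ^ 2 := by
  rw [← real_inner_self_eq_norm_sq, real_inner_eq_tsum]
  simp [sq]

theorem abs_apply_le_norm (x : ℓ²(ι, ℝ)) (n : ι) : |x n| ≤ ‖x‖ :=
  lp.norm_apply_le_norm two_ne_zero x n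

end lp

end RealL2

section Shift

variable {ι : Type*} [AddGroup ι]

theorem tsum_comp_add_right {α : Type*} [AddCommMonoid α] [TopologicalSpace α] (f : ι → α)
    (e : ι) : ∑' n, f (n + e) = ∑' n, f n :=
  (Equiv.addRight e).tsum_eq f

theorem Memℓp.comp_add_right {x : ι → ℝ} (hx : Memℓp x 2) (e : ι) :
    Memℓp (fun n => x (n + e)) 2 := by
  have := (Equiv.addRight e).summable_iff.2 (memℓp_two_iff_summable_sq.1 hx)
  exact memℓp_two_iff_summable_sq.2 this

def lpShift (e : ι) : ℓ²(ι, ℝ) →L[ℝ] ℓ²(ι, ℝ) :=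
  LinearMap.mkContinuous
    { toFun x := ⟨fun n => x (n + e), (lp.memℓp x).comp_add_right e⟩
      map_add' _ _ := rfl
      map_smul' _ _ := rfl }
    1 fun x => by
      rw [one_mul, ← sq_le_sq₀ (norm_nonneg _) (norm_nonneg _), lp.norm_sq_eq_tsum_sq,
        lp.norm_sq_eq_tsum_sq]
      exact (tsum_comp_add_right (fun n => x n ^ 2) e).le

@[simp]
theorem lpShift_apply (e : ι) (x : ℓ²(ι, ℝ)) (n : ι) : lpShift e x n = x (n + e) := rfl

theorem norm_lpShift (e : ι) (x : ℓ²(ι, ℝ)) : ‖lpShift e x‖ = ‖x‖ := by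
  rw [← sq_eq_sq₀ (norm_nonneg _) (norm_nonneg _), lp.norm_sq_eq_tsum_sq,
    lp.norm_sq_eq_tsum_sq]
  exact tsum_comp_add_right (fun n => x n ^ 2) e

theorem inner_lpShift_left (e : ι) (x y : ℓ²(ι, ℝ)) :
    ⟪lpShift e x, y⟫ = ⟪x, lpShift (-e) y⟫ := by
  simp only [lp.real_inner_eq_tsum, lpShift_apply]
  rw [← tsum_comp_add_right (fun n => x n * y (n + -e)) e]
  simp

def lpSecondDiff (e : ι) : ℓ²(ι, ℝ) →L[ℝ] ℓ²(ι, ℝ) :=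
  lpShift e + lpShift (-e) - (2 : ℝ) • ContinuousLinearMap.id ℝ _

@[simp]
theorem lpSecondDiff_apply (e : ι) (x : ℓ²(ι, ℝ)) (n : ι) :
    lpSecondDiff e x n = x (n + e) + x (n - e) - 2 * x n := by
  rw [sub_eq_add_neg n e]
  rfl

theorem inner_neg_lpSecondDiff_self (e : ι) (x : ℓ²(ι, ℝ)) :
    ⟪-lpSecondDiff e x, x⟫ = ‖lpShift e x - x‖ ^ 2 := by
  have hsymm : ⟪lpShift (-e) x, x⟫ = ⟪lpShift e x, x⟫ := by
    rw [real_inner_comm, ← inner_lpShift_left]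
  rw [norm_sub_sq_real, norm_lpShift, ← real_inner_self_eq_norm_sq]
  simp only [lpSecondDiff, sub_apply, add_apply, smul_apply, ContinuousLinearMap.id_apply,
    inner_neg_left, inner_sub_left, inner_add_left, real_inner_smul_left, hsymm]
  ring

theorem isPositive_neg_lpSecondDiff (e : ι) : (-lpSecondDiff e).IsPositive := by
  refine (ContinuousLinearMap.isPositive_iff _).2 ⟨fun x y => ?_, fun x => ?_⟩
  · simp only [ContinuousLinearMap.coe_coe, lpSecondDiff, neg_apply, sub_apply, add_apply,
      smul_apply, ContinuousLinearMap.id_apply, inner_neg_left, inner_neg_right,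
      inner_sub_left, inner_sub_right, inner_add_left, inner_add_right, real_inner_smul_left,
      real_inner_smul_right, inner_lpShift_left, neg_neg]
    ring
  · rw [neg_apply, inner_neg_lpSecondDiff_self]
    positivity

end Shift

section Multiplication

variable {ι : Type*}

def lpMul (V : ℓ^∞(ι, ℝ)) : ℓ²(ι, ℝ) →L[ℝ] ℓ²(ι, ℝ) :=
  lp.mapCLM 2 (fun n => V n • ContinuousLinearMap.id ℝ ℝ) (norm_nonneg V) fun n =>
    (norm_smul_le _ _).trans <| by
      simpa using lp.norm_apply_le_norm ENNReal.top_ne_zero V n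

@[simp]
theorem lpMul_apply (V : ℓ^∞(ι, ℝ)) (x : ℓ²(ι, ℝ)) (n : ι) : lpMul V x n = V n * x n := by
  simp [lpMul]

theorem inner_lpMul_left (V : ℓ^∞(ι, ℝ)) (x y : ℓ²(ι, ℝ)) :
    ⟪lpMul V x, y⟫ = ∑' n, V n * x n * y n := by
  simp [lp.real_inner_eq_tsum]

theorem isPositive_lpMul {V : ℓ^∞(ι, ℝ)} (hV : ∀ n, 0 ≤ V n) : (lpMul V).IsPositive := by
  refine (ContinuousLinearMap.isPositive_iff _).2 ⟨fun x y => ?_, fun x => ?_⟩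
  · rw [ContinuousLinearMap.coe_coe, inner_lpMul_left, real_inner_comm, inner_lpMul_left]
    exact tsum_congr fun n => by ring
  · rw [inner_lpMul_left]
    exact tsum_nonneg fun n => by nlinarith [hV n, mul_self_nonneg (x n)]

end Multiplication

section Lattice

variable {d : ℕ}

def latticeLaplacian (d : ℕ) (h : ℝ) : ℓ²(ZLat d, ℝ) →L[ℝ] ℓ²(ZLat d, ℝ) :=
  (h ^ 2)⁻¹ • ∑ j : Fin d, lpSecondDiff (latE j)

theorem latticeLaplacian_apply (h : ℝ) (x : ℓ²(ZLat d, ℝ)) (n : ZLat d) :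
    latticeLaplacian d h x n = discLapR d h x n := by
  rw [latticeLaplacian, smul_apply, sum_apply, lp.coeFn_smul, Pi.smul_apply,
    lp.coeFn_sum, Finset.sum_apply, smul_eq_mul, discLapR, div_eq_inv_mul]
  simp only [lpSecondDiff_apply]

theorem isPositive_neg_latticeLaplacian (h : ℝ) : (-latticeLaplacian d h).IsPositive := by
  rw [latticeLaplacian, ← smul_neg, ← Finset.sum_neg_distrib]
  exact (ContinuousLinearMap.isPositive_sum _ fun j _ => isPositive_neg_lpSecondDiff _)
    |>.smul_of_nonneg (by positivity)

theorem inner_neg_latticeLaplacian_self (h : ℝ) (x : ℓ²(ZLat d, ℝ)) :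
    ⟪-latticeLaplacian d h x, x⟫ = ∑' n, (∑ j : Fin d, (x (n + latE j) - x n) ^ 2) / h ^ 2 := by
  have hdiff (j : Fin d) : ⟪-lpSecondDiff (latE j) x, x⟫ = ∑' n, (x (n + latE j) - x n) ^ 2 := by
    rw [inner_neg_lpSecondDiff_self, lp.norm_sq_eq_tsum_sq]
    rfl
  have hsum (j : Fin d) : Summable fun n => (x (n + latE j) - x n) ^ 2 :=
    lp.summable_sq (lpShift (latE j) x - x)
  calc ⟪-latticeLaplacian d h x, x⟫ = (h ^ 2)⁻¹ * ∑ j : Fin d, ⟪-lpSecondDiff (latE j) x, x⟫ := by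
        simp only [latticeLaplacian, smul_apply, sum_apply, inner_neg_left, real_inner_smul_left,
          sum_inner, Finset.sum_neg_distrib, mul_neg]
    _ = ∑' n, (∑ j : Fin d, (x (n + latE j) - x n) ^ 2) / h ^ 2 := by
        rw [tsum_div_const, Summable.tsum_finsetSum fun j _ => hsum j, div_eq_inv_mul]
        simp only [hdiff]

end Lattice

section ScalarPower

variable {σ : ℝ}

theorem abs_rpow_two_mul (σ a : ℝ) : |a| ^ (2 * σ) = (a ^ 2) ^ σ := by
  rw [Real.rpow_mul (abs_nonneg a), Real.rpow_two, sq_abs]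

theorem abs_rpow_two_mul_add_two (hσ : 0 ≤ σ) (a : ℝ) :
    |a| ^ (2 * σ + 2) = |a| ^ (2 * σ) * a ^ 2 := by
  rw [Real.rpow_add' (abs_nonneg a) (by positivity), Real.rpow_two, sq_abs]

theorem hasDerivAt_abs_rpow_two_mul_add_two (hσ : 0 ≤ σ) (a : ℝ) :
    HasDerivAt (fun b : ℝ => |b| ^ (2 * σ + 2)) ((2 * σ + 2) * (|a| ^ (2 * σ) * a)) a := by
  have hsq (b : ℝ) : |b| ^ (2 * σ + 2) = (b ^ 2) ^ (σ + 1) := by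
    rw [← abs_rpow_two_mul]; ring_nf
  simp_rw [hsq, abs_rpow_two_mul]
  convert (hasDerivAt_pow 2 a).rpow_const (p := σ + 1) (Or.inr (by linarith)) using 1
  simp only [add_sub_cancel_right]
  push_cast
  ring

theorem hasDerivAt_abs_rpow_two_mul_mul_self (hσ : 0 < σ) (a : ℝ) :
    HasDerivAt (fun b : ℝ => |b| ^ (2 * σ) * b) ((2 * σ + 1) * |a| ^ (2 * σ)) a := by
  rcases eq_or_ne a 0 with rfl | ha
  · -- `|b| ^ (2σ)` need not be differentiable at `0`, but it tends to `0` there.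
    have hlim : Tendsto (fun b : ℝ => |b| ^ (2 * σ)) (𝓝 0) (𝓝 0) := by
      simpa [Real.zero_rpow (by positivity : 2 * σ ≠ 0)] using
        (continuous_abs.tendsto (0 : ℝ)).rpow_const (p := 2 * σ) (Or.inr (by positivity))
    rw [hasDerivAt_iff_isLittleO_nhds_zero]
    simpa [Real.zero_rpow (by positivity : 2 * σ ≠ 0)] using
      ((isLittleO_one_iff ℝ).2 hlim).mul_isBigO (isBigO_refl (fun b : ℝ => b) _)
  · have hsq : 0 < a ^ 2 := by positivity
    simp_rw [abs_rpow_two_mul]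
    refine (((hasDerivAt_pow 2 a).rpow_const (p := σ) (Or.inl hsq.ne')).mul
      (hasDerivAt_id a)).congr_deriv ?_
    rw [Real.rpow_sub_one hsq.ne', id_eq]
    field_simp
    push_cast
    ring

theorem abs_rpow_two_mul_mul_self_sub_le (hσ : 0 < σ) {M x y : ℝ} (hx : |x| ≤ M) (hy : |y| ≤ M) :
    |(|y| ^ (2 * σ) * y - |x| ^ (2 * σ) * x)| ≤ (2 * σ + 1) * M ^ (2 * σ) * |y - x| := by
  have hmem {z : ℝ} (hz : |z| ≤ M) : z ∈ Set.Icc (-M) M := abs_le.1 hz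
  simpa [Real.norm_eq_abs] using (convex_Icc (-M) M).norm_image_sub_le_of_norm_hasDerivWithin_le
    (fun z _ => (hasDerivAt_abs_rpow_two_mul_mul_self hσ z).hasDerivWithinAt)
    (fun z hz => by
      rw [Real.norm_eq_abs, abs_mul, abs_of_pos (by linarith), abs_of_nonneg (by positivity)]
      gcongr
      exact abs_le.2 hz)
    (hmem hx) (hmem hy)

theorem abs_rpow_two_mul_add_two_taylor_le (hσ : 0 < σ) (a b : ℝ) :
    |(|a + b| ^ (2 * σ + 2) - |a| ^ (2 * σ + 2) - (2 * σ + 2) * (|a| ^ (2 * σ) * a) * b)|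
      ≤ (2 * σ + 2) * (2 * σ + 1) * (|a| + |b|) ^ (2 * σ) * b ^ 2 := by
  set M := |a| + |b|
  have hbound {z : ℝ} (hz : z ∈ Set.uIcc a (a + b)) : |z - a| ≤ |b| ∧ |z| ≤ M := by
    have hza := Set.abs_sub_left_of_mem_uIcc hz
    rw [add_sub_cancel_left] at hza
    exact ⟨hza, by linarith [abs_sub_abs_le_abs_sub z a]⟩
  have hderiv (z : ℝ) :
      HasDerivAt (fun w => |w| ^ (2 * σ + 2) - (2 * σ + 2) * (|a| ^ (2 * σ) * a) * w)
      ((2 * σ + 2) * (|z| ^ (2 * σ) * z - |a| ^ (2 * σ) * a)) z := by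
    refine ((hasDerivAt_abs_rpow_two_mul_add_two hσ.le z).sub
      ((hasDerivAt_id z).const_mul ((2 * σ + 2) * (|a| ^ (2 * σ) * a)))).congr_deriv ?_
    ring
  have key := (convex_uIcc a (a + b)).norm_image_sub_le_of_norm_hasDerivWithin_le
    (fun z _ => (hderiv z).hasDerivWithinAt)
    (C := (2 * σ + 2) * ((2 * σ + 1) * M ^ (2 * σ) * |b|)) (fun z hz => by
      obtain ⟨hza, hzM⟩ := hbound hz
      rw [Real.norm_eq_abs, abs_mul, abs_of_pos (by linarith)]
      gcongr
      calc _ ≤ (2 * σ + 1) * M ^ (2 * σ) * |z - a| :=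
            abs_rpow_two_mul_mul_self_sub_le hσ (by simp [M]) hzM
        _ ≤ _ := by gcongr)
    Set.left_mem_uIcc Set.right_mem_uIcc
  rw [Real.norm_eq_abs, Real.norm_eq_abs, add_sub_cancel_left] at key
  calc _ = |(|a + b| ^ (2 * σ + 2) - (2 * σ + 2) * (|a| ^ (2 * σ) * a) * (a + b))
          - (|a| ^ (2 * σ + 2) - (2 * σ + 2) * (|a| ^ (2 * σ) * a) * a)| := by
        congr 1; ring
    _ ≤ _ := key
    _ = _ := by rw [← sq_abs b]; ring

end ScalarPower

section PowerNonlinearity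

variable {ι : Type*} {σ : ℝ}

theorem summable_abs_rpow_two_mul_add_two (hσ : 0 ≤ σ) (x : ℓ²(ι, ℝ)) :
    Summable fun n => |x n| ^ (2 * σ + 2) := by
  refine .of_nonneg_of_le (fun n => by positivity) (fun n => ?_)
    ((lp.summable_sq x).mul_left (‖x‖ ^ (2 * σ)))
  rw [abs_rpow_two_mul_add_two hσ]
  gcongr
  exact lp.abs_apply_le_norm x n

def lpPowNonlin (σ : ℝ) (hσ : 0 ≤ σ) (x : ℓ²(ι, ℝ)) : ℓ²(ι, ℝ) :=
  ⟨fun n => |x n| ^ (2 * σ) * x n, by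
    refine memℓp_two_iff_summable_sq.2 <| .of_nonneg_of_le (fun n => by positivity)
      (fun n => ?_) ((lp.summable_sq x).mul_left ((‖x‖ ^ (2 * σ)) ^ 2))
    rw [mul_pow]
    gcongr
    exact lp.abs_apply_le_norm x n⟩

@[simp]
theorem lpPowNonlin_apply (hσ : 0 ≤ σ) (x : ℓ²(ι, ℝ)) (n : ι) :
    lpPowNonlin σ hσ x n = |x n| ^ (2 * σ) * x n := rfl

def lpPowPotential (σ : ℝ) (x : ℓ²(ι, ℝ)) : ℝ :=
  (∑' n, |x n| ^ (2 * σ + 2)) / (2 * σ + 2)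

theorem inner_lpPowNonlin_self (hσ : 0 ≤ σ) (x : ℓ²(ι, ℝ)) :
    ⟪x, lpPowNonlin σ hσ x⟫ = (2 * σ + 2) * lpPowPotential σ x := by
  rw [lpPowPotential, mul_div_cancel₀ _ (by positivity), lp.real_inner_eq_tsum]
  exact tsum_congr fun n => by rw [lpPowNonlin_apply, abs_rpow_two_mul_add_two hσ]; ring

theorem hasFDerivAt_tsum_abs_rpow_two_mul_add_two (hσ : 0 < σ) (x : ℓ²(ι, ℝ)) :
    HasFDerivAt (fun y : ℓ²(ι, ℝ) => ∑' n, |y n| ^ (2 * σ + 2))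
      ((2 * σ + 2) • innerSL ℝ (lpPowNonlin σ hσ.le x)) x := by
  rw [hasFDerivAt_iff_isLittleO_nhds_zero]
  refine IsBigO.trans_isLittleO ?_ (isLittleO_norm_pow_id one_lt_two)
  refine IsBigO.of_bound ((2 * σ + 2) * (2 * σ + 1) * (‖x‖ + 1) ^ (2 * σ)) ?_
  filter_upwards [Metric.closedBall_mem_nhds (0 : ℓ²(ι, ℝ)) one_pos] with v hv
  rw [Metric.mem_closedBall, dist_zero_right] at hv
  have hrem : (∑' n, |(x + v) n| ^ (2 * σ + 2)) - (∑' n, |x n| ^ (2 * σ + 2))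
      - ((2 * σ + 2) • innerSL ℝ (lpPowNonlin σ hσ.le x)) v
      = ∑' n, (|x n + v n| ^ (2 * σ + 2) - |x n| ^ (2 * σ + 2)
          - (2 * σ + 2) * (|x n| ^ (2 * σ) * x n * v n)) := by
    have hxv := summable_abs_rpow_two_mul_add_two hσ.le (x + v)
    have hx := summable_abs_rpow_two_mul_add_two hσ.le x
    have hlin := (lp.summable_real_mul (lpPowNonlin σ hσ.le x) v).mul_left (2 * σ + 2)
    rw [smul_apply, innerSL_apply_apply, lp.real_inner_eq_tsum, smul_eq_mul, ← tsum_mul_left,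
      ← hxv.tsum_sub hx, ← (hxv.sub hx).tsum_sub hlin]
    rfl
  rw [hrem, Real.norm_eq_abs (‖v‖ ^ 2), abs_of_nonneg (by positivity), lp.norm_sq_eq_tsum_sq,
    ← tsum_mul_left]
  refine tsum_of_norm_bounded ((lp.summable_sq v).mul_left _).hasSum fun n => ?_
  have htaylor := abs_rpow_two_mul_add_two_taylor_le hσ (x n) (v n)
  rw [mul_assoc (2 * σ + 2)] at htaylor
  refine htaylor.trans ?_
  gcongr
  all_goals linarith [lp.abs_apply_le_norm x n, lp.abs_apply_le_norm v n]

theorem hasFDerivAt_lpPowPotential (hσ : 0 < σ) (x : ℓ²(ι, ℝ)) :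
    HasFDerivAt (lpPowPotential σ) (innerSL ℝ (lpPowNonlin σ hσ.le x)) x := by
  have h := (hasFDerivAt_tsum_abs_rpow_two_mul_add_two hσ x).const_mul (2 * σ + 2)⁻¹
  rw [inv_smul_smul₀ (by positivity)] at h
  exact h.congr_of_eventuallyEq (.of_forall fun y => div_eq_inv_mul _ _)

end PowerNonlinearity

section WaveEnergy

variable {E : Type*} [NormedAddCommGroup E] [InnerProductSpace ℝ E]
  {L : E →L[ℝ] E} {G : E → ℝ} {N : E → E} {S : Set ℝ}

def waveEnergy (L : E →L[ℝ] E) (G : E → ℝ) (x y : E) : ℝ :=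
  ‖y‖ ^ 2 / 2 + ⟪L x, x⟫ / 2 - G x

theorem hasDerivWithinAt_waveEnergy (hL : L.IsSymmetric)
    (hG : ∀ x, HasFDerivAt G (innerSL ℝ (N x)) x) {u u' : ℝ → E} {w : E} {t : ℝ}
    (hu : HasDerivWithinAt u (u' t) S t) (hu' : HasDerivWithinAt u' w S t) :
    HasDerivWithinAt (fun s => waveEnergy L G (u s) (u' s))
      ⟪w + L (u t) - N (u t), u' t⟫ S t := by
  have hLu := (L.hasFDerivAt.comp_hasDerivWithinAt t hu).inner ℝ hu
  have hGu := (hG (u t)).comp_hasDerivWithinAt t hu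
  refine (((hu'.norm_sq.div_const 2).add (hLu.div_const 2)).sub hGu).congr_deriv ?_
  have hsymm : ⟪L (u' t), u t⟫ = ⟪L (u t), u' t⟫ := by
    rw [real_inner_comm]; exact (hL (u t) (u' t)).symm
  rw [Function.comp_apply, innerSL_apply_apply, hsymm, inner_sub_left, inner_add_left,
    real_inner_comm w]
  ring

theorem Convex.waveEnergy_eq (hS : Convex ℝ S) (hL : L.IsSymmetric)
    (hG : ∀ x, HasFDerivAt G (innerSL ℝ (N x)) x) {u u' u'' : ℝ → E}
    (hu : ∀ t ∈ S, HasDerivWithinAt u (u' t) S t) (hu' : ∀ t ∈ S, HasDerivWithinAt u' (u'' t) S t)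
    (hacc : ∀ t ∈ S, u'' t + L (u t) = N (u t)) {s t : ℝ} (hs : s ∈ S) (ht : t ∈ S) :
    waveEnergy L G (u t) (u' t) = waveEnergy L G (u s) (u' s) := by
  have hderiv (r : ℝ) (hr : r ∈ S) :
      HasDerivWithinAt (fun r => waveEnergy L G (u r) (u' r)) 0 S r := by
    simpa [hacc r hr] using hasDerivWithinAt_waveEnergy hL hG (hu r hr) (hu' r hr)
  simpa [sub_eq_zero] using
    hS.norm_image_sub_le_of_norm_hasDerivWithin_le hderiv (fun _ _ => norm_zero.le) hs ht

theorem add_two_mul_norm_sq_le_of_waveEnergy_nonpos {p : ℝ} (hp : 2 ≤ p) {x y : E}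
    (hLx : 0 ≤ ⟪L x, x⟫) (hN : ⟪x, N x⟫ = p * G x) (hE : waveEnergy L G x y ≤ 0) :
    (p + 2) * ‖y‖ ^ 2 ≤ 2 * (‖y‖ ^ 2 + ⟪x, N x - L x⟫) := by
  rw [waveEnergy] at hE
  rw [inner_sub_right, hN, real_inner_comm]
  nlinarith [mul_nonneg (sub_nonneg.2 hp) hLx]

end WaveEnergy

section KleinGordon

variable {d : ℕ}

def kgOperator (d : ℕ) (h : ℝ) (V : ℓ^∞(ZLat d, ℝ)) : ℓ²(ZLat d, ℝ) →L[ℝ] ℓ²(ZLat d, ℝ) :=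
  lpMul V - latticeLaplacian d h

theorem isPositive_kgOperator (h : ℝ) {V : ℓ^∞(ZLat d, ℝ)} (hV : ∀ n, 0 ≤ V n) :
    (kgOperator d h V).IsPositive := by
  rw [kgOperator, sub_eq_add_neg]
  exact (isPositive_lpMul hV).add (isPositive_neg_latticeLaplacian h)

theorem inner_kgOperator_self (h : ℝ) (V : ℓ^∞(ZLat d, ℝ)) (x : ℓ²(ZLat d, ℝ)) :
    ⟪kgOperator d h V x, x⟫
      = ∑' n, V n * x n ^ 2 + ∑' n, (∑ j : Fin d, (x (n + latE j) - x n) ^ 2) / h ^ 2 := by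
  rw [kgOperator, sub_apply, inner_sub_left, sub_eq_add_neg ⟪lpMul V x, x⟫, ← inner_neg_left,
    inner_neg_latticeLaplacian_self, inner_lpMul_left]
  simp only [mul_assoc, sq]

theorem energyKG_eq_waveEnergy {σ : ℝ} (hσ : 0 ≤ σ) (h : ℝ) (V : ℓ^∞(ZLat d, ℝ))
    (x y : ℓ²(ZLat d, ℝ)) :
    energyKG d h σ (-1) V x y = waveEnergy (kgOperator d h V) (lpPowPotential σ) x y := by
  have hdiff : Summable fun n => (∑ j : Fin d, (x (n + latE j) - x n) ^ 2) / h ^ 2 :=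
    (summable_sum fun j _ => lp.summable_sq (lpShift (latE j) x - x)).div_const _
  have hV : Summable fun n => V n * x n ^ 2 := by
    simpa only [lpMul_apply, mul_assoc, ← sq] using lp.summable_real_mul (lpMul V x) x
  have hpow := (summable_abs_rpow_two_mul_add_two hσ x).mul_left (-1 / (σ + 1))
  rw [energyKG, ((((lp.summable_sq y).add hdiff).add hV).tsum_add hpow),
    (((lp.summable_sq y).add hdiff).tsum_add hV), ((lp.summable_sq y).tsum_add hdiff),
    tsum_mul_left, waveEnergy, inner_kgOperator_self, lpPowPotential, lp.norm_sq_eq_tsum_sq]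
  field_simp
  ring

theorem IsDKGSolutionOn.add_kgOperator_eq {h σ : ℝ} (hσ : 0 ≤ σ) {V : ℓ^∞(ZLat d, ℝ)}
    {S : Set ℝ} {u u' u'' : ℝ → ℓ²(ZLat d, ℝ)}
    (hsol : IsDKGSolutionOn d h σ (-1) V 2 S u u' u'') {t : ℝ} (ht : t ∈ S) :
    u'' t + kgOperator d h V (u t) = lpPowNonlin σ hσ (u t) := by
  ext n
  have hpde := hsol.2.2.2 t ht n
  simp only [lp.coeFn_add, Pi.add_apply, kgOperator, sub_apply, lp.coeFn_sub, Pi.sub_apply,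
    lpMul_apply, latticeLaplacian_apply, lpPowNonlin_apply]
  linarith

end KleinGordon

theorem dkg_focusing_variance_convexity_general
    (d : ℕ) (h : ℝ) (σ : ℝ) (hσ : 0 < σ)
    (V : ZLat d → ℝ) (CV : ℝ) (hVbdd : ∀ n, |V n| ≤ CV)
    (c : ℝ) (hc : 0 < c) (hVlow : ∀ n, c ≤ V n)
    (f g : lp (fun _ : ZLat d => ℝ) 2)
    (hE : energyKG d h σ (-1) V (⇑f) (⇑g) < 0)
    (T : ℝ) (u u' u'' : ℝ → lp (fun _ : ZLat d => ℝ) 2)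
    (hsol : IsDKGSolutionOn d h σ (-1) V 2 (Set.Ico 0 T) u u' u'')
    (hf : u 0 = f) (hg : u' 0 = g) :
    ∃ I' I'' : ℝ → ℝ,
      (∀ t ∈ Set.Ico (0 : ℝ) T,
        HasDerivWithinAt (fun s => ∑' n : ZLat d, ((u s : ZLat d → ℝ) n) ^ 2) (I' t)
          (Set.Ico (0 : ℝ) T) t) ∧
      (∀ t ∈ Set.Ico (0 : ℝ) T,
        HasDerivWithinAt I' (I'' t) (Set.Ico (0 : ℝ) T) t) ∧
      (∀ t ∈ Set.Ico (0 : ℝ) T,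
        (4 + 2 * σ) * ∑' n : ZLat d, ((u' t : ZLat d → ℝ) n) ^ 2 ≤ I'' t) := by
  let Vb : ℓ^∞(ZLat d, ℝ) := ⟨V, memℓp_infty_iff.2 ⟨CV, Set.forall_mem_range.2 hVbdd⟩⟩
  have hL : (kgOperator d h Vb).IsPositive :=
    isPositive_kgOperator h fun n => hc.le.trans (hVlow n)
  have hacc (t : ℝ) (ht : t ∈ Set.Ico 0 T) := hsol.add_kgOperator_eq (V := Vb) hσ.le ht
  have henergy (t : ℝ) (ht : t ∈ Set.Ico 0 T) :
      waveEnergy (kgOperator d h Vb) (lpPowPotential σ) (u t) (u' t) < 0 := by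
    rw [(convex_Ico 0 T).waveEnergy_eq hL.isSymmetric (hasFDerivAt_lpPowPotential hσ) hsol.1
      hsol.2.1 hacc ⟨le_rfl, ht.1.trans_lt ht.2⟩ ht, hf, hg, ← energyKG_eq_waveEnergy hσ.le]
    exact hE
  refine ⟨fun t => 2 * ⟪u t, u' t⟫, fun t => 2 * (‖u' t‖ ^ 2 + ⟪u t, u'' t⟫), fun t ht => ?_,
    fun t ht => ?_, fun t ht => ?_⟩
  · simp_rw [← lp.norm_sq_eq_tsum_sq]
    exact (hsol.1 t ht).norm_sq
  · refine (((hsol.1 t ht).inner ℝ (hsol.2.1 t ht)).const_mul 2).congr_deriv ?_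
    rw [real_inner_self_eq_norm_sq, add_comm]
  · rw [← lp.norm_sq_eq_tsum_sq]
    beta_reduce
    rw [eq_sub_of_add_eq (hacc t ht)]
    linarith [add_two_mul_norm_sq_le_of_waveEnergy_nonpos (by linarith) (hL.inner_nonneg_left _)
      (inner_lpPowNonlin_self hσ.le (u t)) (henergy t ht).le]

/-- **Convexity inequality for the variance functional in the focusing discrete Klein–Gordon
equation.** If `λ = −1`, `inf_n V_n > 0`, `V` bounded, and the real-valued datum
`(f,g) ∈ l²_h × l²_h` has negative energy, then for any twice continuously differentiable
solution `u` on `[0,T)`, the function `I(t) = Σ_n u_n(t)²` is twice differentiable on `[0,T)`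
and `I''(t) ≥ (4+2σ) Σ_n (∂_t u_n(t))²` there. -/
theorem dkg_focusing_variance_convexity
    (d : ℕ) (hd : 1 ≤ d) (h : ℝ) (hh : 0 < h) (σ : ℝ) (hσ : 0 < σ)
    (V : ZLat d → ℝ) (CV : ℝ) (hVbdd : ∀ n, |V n| ≤ CV)
    (c : ℝ) (hc : 0 < c) (hVlow : ∀ n, c ≤ V n)
    (f g : lp (fun _ : ZLat d => ℝ) 2)
    (hE : energyKG d h σ (-1) V (⇑f) (⇑g) < 0)
    (T : ℝ) (u u' u'' : ℝ → lp (fun _ : ZLat d => ℝ) 2)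
    (hsol : IsDKGSolutionOn d h σ (-1) V 2 (Set.Ico 0 T) u u' u'')
    (hf : u 0 = f) (hg : u' 0 = g) :
    ∃ I' I'' : ℝ → ℝ,
      (∀ t ∈ Set.Ico (0 : ℝ) T,
        HasDerivWithinAt (fun s => ∑' n : ZLat d, ((u s : ZLat d → ℝ) n) ^ 2) (I' t)
          (Set.Ico (0 : ℝ) T) t) ∧
      (∀ t ∈ Set.Ico (0 : ℝ) T,
        HasDerivWithinAt I' (I'' t) (Set.Ico (0 : ℝ) T) t) ∧
      (∀ t ∈ Set.Ico (0 : ℝ) T,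
        (4 + 2 * σ) * ∑' n : ZLat d, ((u' t : ZLat d → ℝ) n) ^ 2 ≤ I'' t) :=
  dkg_focusing_variance_convexity_general d h σ hσ V CV hVbdd c hc hVlow f g hE T u u' u'' hsol hf
    hg
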